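/- Let w* = (1/(‖μ‖₂·√(1+γ²)))·[γμ, μ, 0_d] ∈ ℝ^{3d}. Then w* has the least 0-1 classification error on the context-c1 distribution among all norm-bounded linear predictors: for every w ∈ W1, Acc_{P_{c1}}(w) ≤ Acc_{P_{c1}}(w*). -/

import Mathlib

open MeasureTheory ProbabilityTheory Real Filter
open scoped ENNReal NNReal

noncomputable section

/-- Complementary error function `erfc x = (2/√π) ∫_x^∞ e^{−t²} dt`. -/
def erfc (x : ℝ) : ℝ := 2 / Real.sqrt Real.pi * ∫ t in Set.Ioi x, Real.exp (-t ^ 2)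

/-- A vector in `ℝ^d`. -/
abbrev Vec (d : ℕ) := Fin d → ℝ

/-- The input space `ℝ^{3d}`, viewed as three blocks `x = [x1, x2, x3]`. -/
abbrev Inp (d : ℕ) := Vec d × Vec d × Vec d

/-- Euclidean dot product on `ℝ^d`. -/
def dot {d : ℕ} (v w : Vec d) : ℝ := ∑ i, v i * w i

/-- Euclidean norm on `ℝ^d`. -/
def vnorm {d : ℕ} (v : Vec d) : ℝ := Real.sqrt (∑ i, v i ^ 2)

/-- Euclidean norm on the full input space `ℝ^{3d}`. -/
def xnorm {d : ℕ} (x : Inp d) : ℝ :=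
  Real.sqrt ((∑ i, x.1 i ^ 2) + (∑ i, x.2.1 i ^ 2) + ∑ i, x.2.2 i ^ 2)

/-- Value `wᵀx` of the linear predictor `w` at input `x`. -/
def pred {d : ℕ} (w x : Inp d) : ℝ := dot w.1 x.1 + dot w.2.1 x.2.1 + dot w.2.2 x.2.2

/-- Isotropic Gaussian `N(m, v·I_d)` on `ℝ^d` (product of coordinate Gaussians). -/
def gaussVec (d : ℕ) (m : Vec d) (v : ℝ) : Measure (Vec d) :=
  Measure.pi fun i => gaussianReal (m i) (Real.toNNReal v)

/-- Conditional law of `x` given the label `y` in context `c1`: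
`x1 ~ N(μy, σ²I)`, `x2 ~ N(μy, γσ²I)`, `x3 ~ N(μ, η²I)`, independent blocks. -/
def condX1 (d : ℕ) (μ : Vec d) (σ γ η : ℝ) (y : ℝ) : Measure (Inp d) :=
  (gaussVec d (fun i => μ i * y) (σ ^ 2)).prod
    ((gaussVec d (fun i => μ i * y) (γ * σ ^ 2)).prod
      (gaussVec d μ (η ^ 2)))

/-- Conditional law of `x` given the label `y` in context `c2`:
`x1 ~ N(μy, σ²I)`, `x2 ~ N(−μy, (σ²/γ)I)`, `x3 ~ N(−μ, η²I)`, independent blocks. -/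
def condX2 (d : ℕ) (μ : Vec d) (σ γ η : ℝ) (y : ℝ) : Measure (Inp d) :=
  (gaussVec d (fun i => μ i * y) (σ ^ 2)).prod
    ((gaussVec d (fun i => -μ i * y) (σ ^ 2 / γ)).prod
      (gaussVec d (fun i => -μ i) (η ^ 2)))

/-- Joint law of `(x, y)`: `y` uniform on `{−1, 1}`, then `x ~ cond y`. -/
def jointOf {d : ℕ} (cond : ℝ → Measure (Inp d)) : Measure (Inp d × ℝ) :=
  (2 : ℝ≥0∞)⁻¹ • (cond 1).prod (Measure.dirac (1 : ℝ))
    + (2 : ℝ≥0∞)⁻¹ • (cond (-1)).prod (Measure.dirac (-1 : ℝ))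

/-- The context-`c1` distribution over `(x, y)`. -/
def Pc1 (d : ℕ) (μ : Vec d) (σ γ η : ℝ) : Measure (Inp d × ℝ) :=
  jointOf (condX1 d μ σ γ η)

/-- The context-`c2` distribution over `(x, y)`. -/
def Pc2 (d : ℕ) (μ : Vec d) (σ γ η : ℝ) : Measure (Inp d × ℝ) :=
  jointOf (condX2 d μ σ γ η)

/-- Accuracy `Acc_P(w) = P(sign(wᵀx) = y)` of linear predictor `w` under joint law `P`. -/
def AccP {d : ℕ} (P : Measure (Inp d × ℝ)) (w : Inp d) : ℝ :=
  (P {p | Real.sign (pred w p.1) = p.2}).toReal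

/-- Norm-bounded linear predictors `W1 = {w ∈ ℝ^{3d} : ‖w‖₂ ≤ 1}`. -/
def W1 (d : ℕ) : Set (Inp d) := {w | xnorm w ≤ 1}

/-- Population exponential loss `E_P[exp(−y·wᵀx)]`. -/
def expLoss {d : ℕ} (P : Measure (Inp d × ℝ)) (w : Inp d) : ℝ :=
  ∫ p, Real.exp (-(p.2 * pred w p.1)) ∂P

end

/-! Changing the label from `y = 1` to `y = -1` multiplies the density of `x` by the likelihood
ratio `exp (-2 s(x) / (γ σ²))`, where `s(x) = γ ⟪μ, x₁⟫ + ⟪μ, x₂⟫`: the `x₃` block has the same law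
under both labels. For disjoint decision regions `A` (predict `1`) and `B` (predict `-1`) the
Neyman–Pearson exchange argument then shows that `P(A | 1) + P(B | -1)` is largest for
`A = {s > 0}`, `B = {s ≤ 0}`. The tie set `{s = 0}` is a hyperplane in the first two blocks, which
have Lebesgue densities, so it is null. Finally `w*ᵀx` is a positive multiple of `s(x)`. -/

namespace MeasureTheory

variable {α : Type*} [MeasurableSpace α] {ν : Measure α} {ρ : α → ℝ≥0∞} {S : Set α}

theorem lintegral_pi_prod {n : ℕ} (μ : Fin n → Measure α)
    [∀ i, SigmaFinite (μ i)] {f : Fin n → α → ℝ≥0∞} (hf : ∀ i, Measurable (f i)) :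
    ∫⁻ x, ∏ i, f i (x i) ∂Measure.pi μ = ∏ i, ∫⁻ t, f i t ∂μ i := by
  induction n with
  | zero => simp
  | succ n ih =>
    have hsplit := (measurePreserving_piFinSuccAbove μ 0).symm
    have hg : Measurable fun x : Fin n → α => ∏ i, f i.succ (x i) :=
      Finset.measurable_prod _ fun i _ => (hf i.succ).comp (measurable_pi_apply i)
    simp only [Fin.succAbove_zero] at hsplit
    rw [← hsplit.lintegral_comp (by fun_prop), Fin.prod_univ_succ, ← ih _ fun i => hf i.succ,
      ← lintegral_prod_mul (hf 0).aemeasurable hg.aemeasurable]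
    simp [Fin.prod_univ_succ]

theorem Measure.pi_withDensity {n : ℕ} (μ : Fin n → Measure α)
    [∀ i, SigmaFinite (μ i)] {f : Fin n → α → ℝ≥0∞} (hf : ∀ i, Measurable (f i))
    [∀ i, SigmaFinite ((μ i).withDensity (f i))] :
    Measure.pi (fun i => (μ i).withDensity (f i))
      = (Measure.pi μ).withDensity (fun x => ∏ i, f i (x i)) := by
  refine Measure.pi_eq fun s hs => ?_
  have hbox : (Set.univ.pi s).indicator (fun x => ∏ i, f i (x i))
      = fun x => ∏ i, (s i).indicator (f i) (x i) := by
    ext x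
    by_cases hx : x ∈ Set.univ.pi s
    · rw [Set.indicator_of_mem hx]
      exact Finset.prod_congr rfl fun i _ => (Set.indicator_of_mem (hx i trivial) _).symm
    · obtain ⟨i, hi⟩ : ∃ i, x i ∉ s i := by simpa [Set.mem_univ_pi] using hx
      rw [Set.indicator_of_notMem hx]
      exact (Finset.prod_eq_zero (Finset.mem_univ i) (Set.indicator_of_notMem hi _)).symm
  rw [withDensity_apply _ (.univ_pi hs), ← lintegral_indicator (.univ_pi hs), hbox,
    lintegral_pi_prod _ fun i => (hf i).indicator (hs i)]
  exact Finset.prod_congr rfl fun i _ => by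
    rw [lintegral_indicator (hs i), withDensity_apply _ (hs i)]

theorem withDensity_apply_le_of_le_one (hS : MeasurableSet S) (h : ∀ x ∈ S, ρ x ≤ 1) :
    ν.withDensity ρ S ≤ ν S := by
  simpa [withDensity_apply _ hS] using setLIntegral_mono' hS h

theorem le_withDensity_apply_of_one_le (hS : MeasurableSet S) (h : ∀ x ∈ S, 1 ≤ ρ x) :
    ν S ≤ ν.withDensity ρ S := by
  simpa [withDensity_apply _ hS] using setLIntegral_mono' hS h

theorem measure_add_withDensity_le_of_disjoint {U A B : Set α} (hU : MeasurableSet U)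
    (hA : MeasurableSet A) (hAB : Disjoint A B) (hρU : ∀ x ∈ U, ρ x ≤ 1)
    (hρUc : ∀ x ∈ Uᶜ, 1 ≤ ρ x) :
    ν A + ν.withDensity ρ B ≤ ν U + ν.withDensity ρ Uᶜ := by
  set ν' := ν.withDensity ρ
  have hle : ν (A \ U) ≤ ν' (A \ U) :=
    le_withDensity_apply_of_one_le (hA.diff hU) fun x hx => hρUc x hx.2
  have hge : ν' (Aᶜ ∩ U) ≤ ν (Aᶜ ∩ U) :=
    withDensity_apply_le_of_le_one (hA.compl.inter hU) fun x hx => hρU x hx.2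
  calc ν A + ν' B ≤ ν A + ν' Aᶜ := by gcongr; exact hAB.subset_compl_left
    _ = (ν (A ∩ U) + ν (A \ U)) + (ν' (Aᶜ ∩ U) + ν' (Aᶜ \ U)) := by
      rw [measure_inter_add_sdiff _ hU, measure_inter_add_sdiff _ hU]
    _ ≤ (ν (A ∩ U) + ν' (A \ U)) + (ν (Aᶜ ∩ U) + ν' (Aᶜ \ U)) := by gcongr
    _ = (ν (U ∩ A) + ν (U \ A)) + (ν' (Uᶜ ∩ A) + ν' (Uᶜ \ A)) := by
      rw [Set.inter_comm A, Set.sdiff_eq_compl_inter, show Aᶜ ∩ U = U \ A by ext; simp [and_comm],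
        show Aᶜ \ U = Uᶜ \ A by ext; simp [and_comm]]
      ring
    _ = ν U + ν' Uᶜ := by rw [measure_inter_add_sdiff _ hA, measure_inter_add_sdiff _ hA]

end MeasureTheory

theorem ProbabilityTheory.gaussianReal_neg_eq_withDensity (m : ℝ) {v : ℝ≥0} (hv : v ≠ 0) :
    gaussianReal (-m) v
      = (gaussianReal m v).withDensity fun t => ENNReal.ofReal (exp (-(2 * m * t) / v)) := by
  rw [gaussianReal_of_var_ne_zero _ hv, gaussianReal_of_var_ne_zero _ hv,
    ← withDensity_mul _ (measurable_gaussianPDF _ _) (by fun_prop)]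
  congr 1
  ext t
  have hv' : (v : ℝ) ≠ 0 := by exact_mod_cast hv
  rw [Pi.mul_apply, gaussianPDF, gaussianPDF, ← ENNReal.ofReal_mul (gaussianPDFReal_nonneg _ _ _),
    gaussianPDFReal, gaussianPDFReal]
  simp only [mul_assoc, ← exp_add]
  congr 3
  field_simp
  ring

theorem gaussVec_neg_eq_withDensity {d : ℕ} (m : Vec d) {v : ℝ} (hv : 0 < v) :
    gaussVec d (-m) v
      = (gaussVec d m v).withDensity fun x => ENNReal.ofReal (exp (-(2 * dot m x) / v)) := by
  have hv' : v.toNNReal ≠ 0 := by simpa using hv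
  simp only [gaussVec, Pi.neg_apply, gaussianReal_neg_eq_withDensity _ hv']
  rw [Measure.pi_withDensity _ fun i => by fun_prop]
  congr 1
  ext x
  rw [← ENNReal.ofReal_prod_of_nonneg fun i _ => (exp_pos _).le, ← exp_sum, dot,
    Real.coe_toNNReal _ hv.le, ← Finset.sum_div, Finset.mul_sum]
  simp only [mul_assoc, Finset.sum_neg_distrib]

theorem Real.sign_eq_one_iff {r : ℝ} : Real.sign r = 1 ↔ 0 < r := by
  unfold Real.sign
  split_ifs with h₁ h₂ <;> norm_num <;> linarith

theorem Real.sign_eq_neg_one_iff {r : ℝ} : Real.sign r = -1 ↔ r < 0 := by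
  unfold Real.sign
  split_ifs with h₁ h₂ <;> norm_num <;> linarith

theorem AccP_jointOf {d : ℕ} (cond : ℝ → Measure (Inp d)) [SFinite (cond 1)]
    [SFinite (cond (-1))] (w : Inp d) :
    AccP (jointOf cond) w
      = (2⁻¹ * cond 1 {x | 0 < pred w x} + 2⁻¹ * cond (-1) {x | pred w x < 0}).toReal := by
  simp only [AccP, jointOf, Measure.add_apply, Measure.smul_apply, smul_eq_mul, Measure.prod_dirac,
    (measurableEmbedding_prod_mk_right _).map_apply, Set.preimage_ofPred_eq,
    Real.sign_eq_one_iff, Real.sign_eq_neg_one_iff]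

instance isProbabilityMeasure_gaussVec {d : ℕ} (m : Vec d) (v : ℝ) :
    IsProbabilityMeasure (gaussVec d m v) := by
  unfold gaussVec; infer_instance

instance isProbabilityMeasure_condX1 {d : ℕ} (μ : Vec d) (σ γ η y : ℝ) :
    IsProbabilityMeasure (condX1 d μ σ γ η y) := by
  unfold condX1; infer_instance

@[fun_prop]
theorem measurable_dot {d : ℕ} (v : Vec d) : Measurable (dot v) := by
  unfold dot; fun_prop

@[fun_prop]
theorem measurable_pred {d : ℕ} (w : Inp d) : Measurable (pred w) := by
  unfold pred; fun_prop

theorem vnorm_pos {d : ℕ} {v : Vec d} (hv : v ≠ 0) : 0 < vnorm v := by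
  obtain ⟨i, hi⟩ := Function.ne_iff.mp hv
  exact sqrt_pos.2 <|
    Finset.sum_pos' (fun i _ => sq_nonneg _) ⟨i, Finset.mem_univ _, pow_two_pos_of_ne_zero hi⟩

def c1Score {d : ℕ} (μ : Vec d) (γ : ℝ) (x : Inp d) : ℝ := γ * dot μ x.1 + dot μ x.2.1

theorem condX1_neg_one_eq_withDensity {d : ℕ} (μ : Vec d) {σ γ : ℝ} (η : ℝ) (hσ : σ ≠ 0)
    (hγ : 0 < γ) :
    condX1 d μ σ γ η (-1) = (condX1 d μ σ γ η 1).withDensity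
      fun x => ENNReal.ofReal (exp (-(2 / (γ * σ ^ 2)) * c1Score μ γ x)) := by
  have hσ2 : 0 < σ ^ 2 := by positivity
  have hone : (fun i => μ i * 1) = μ := by ext; simp
  have hneg : (fun i => μ i * -1) = -μ := by ext; simp
  simp only [condX1, hone, hneg]
  rw [gaussVec_neg_eq_withDensity _ hσ2, gaussVec_neg_eq_withDensity _ (by positivity),
    prod_withDensity_left (ν := gaussVec d μ (η ^ 2)) (by fun_prop),
    prod_withDensity (by fun_prop) (by fun_prop)]
  congr 1
  ext x
  rw [← ENNReal.ofReal_mul (exp_pos _).le, ← exp_add, c1Score]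
  congr 2
  field_simp
  ring

theorem gaussVec_absolutelyContinuous {d : ℕ} (m : Vec d) {v : ℝ} (hv : 0 < v) :
    gaussVec d m v ≪ volume := by
  have hv' : v.toNNReal ≠ 0 := by simpa using hv
  have hdens (i : Fin d) := gaussianReal_of_var_ne_zero (m i) hv'
  have (i : Fin d) : SigmaFinite (volume.withDensity (gaussianPDF (m i) v.toNNReal)) := by
    rw [← hdens i]; infer_instance
  simp only [gaussVec, hdens]
  rw [Measure.pi_withDensity _ fun i => measurable_gaussianPDF _ _]
  exact withDensity_absolutelyContinuous _ _

theorem condX1_setOf_c1Score_eq_zero {d : ℕ} {μ : Vec d} (hμ : μ ≠ 0) {σ γ : ℝ} (η y : ℝ)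
    (hσ : σ ≠ 0) (hγ : 0 < γ) :
    condX1 d μ σ γ η y {x | c1Score μ γ x = 0} = 0 := by
  set H := {p : Vec d × Vec d | γ * dot μ p.1 + dot μ p.2 = 0}
  have hH : MeasurableSet H := measurableSet_eq_fun (by fun_prop) measurable_const
  let L : Vec d →ₗ[ℝ] ℝ := dotProductBilin ℝ ℝ μ
  have hker : H = LinearMap.ker ((γ • L).coprod L) := by
    ext p; simp [H, L, dot, dotProduct]
  have hH_null : (volume.prod volume : Measure (Vec d × Vec d)) H = 0 := by
    have := Measure.prod.instIsAddHaarMeasure (volume : Measure (Vec d)) (volume : Measure (Vec d))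
    refine hker ▸ Measure.addHaar_submodule _ _ fun htop => ?_
    obtain ⟨i, hi⟩ := Function.ne_iff.mp hμ
    have hmem := htop ▸ Submodule.mem_top (x := ((0 : Vec d), Pi.single i 1))
    simp [L] at hmem
    exact hi hmem
  have hmarg : (condX1 d μ σ γ η y).map (Prod.map id Prod.fst)
      = (gaussVec d (fun i => μ i * y) (σ ^ 2)).prod
          (gaussVec d (fun i => μ i * y) (γ * σ ^ 2)) := by
    rw [condX1, ← Measure.map_prod_map _ _ measurable_id measurable_fst, Measure.map_id,
      Measure.map_fst_prod, measure_univ, one_smul]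
  rw [show {x | c1Score μ γ x = 0} = Prod.map id Prod.fst ⁻¹' H from rfl,
    ← Measure.map_apply (by fun_prop) hH, hmarg]
  exact ((gaussVec_absolutelyContinuous _ (by positivity)).prod
    (gaussVec_absolutelyContinuous _ (by positivity))) hH_null

theorem condX1_bayes_optimal {d : ℕ} {μ : Vec d} (hμ : μ ≠ 0) {σ γ : ℝ} (η : ℝ) (hσ : σ ≠ 0)
    (hγ : 0 < γ) {A B : Set (Inp d)} (hA : MeasurableSet A) (hAB : Disjoint A B) :
    condX1 d μ σ γ η 1 A + condX1 d μ σ γ η (-1) B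
      ≤ condX1 d μ σ γ η 1 {x | 0 < c1Score μ γ x}
        + condX1 d μ σ γ η (-1) {x | c1Score μ γ x < 0} := by
  set U := {x | 0 < c1Score μ γ x}
  have hU : MeasurableSet U := measurableSet_lt measurable_const (by unfold c1Score; fun_prop)
  have hties : {x | c1Score μ γ x < 0} = Uᶜ \ {x | c1Score μ γ x = 0} := by
    ext x
    simp only [U, Set.mem_ofPred_eq, Set.mem_sdiff, Set.mem_compl_iff, not_lt]
    exact ⟨fun h => ⟨h.le, h.ne⟩, fun h => lt_of_le_of_ne h.1 h.2⟩
  have hk : 0 < 2 / (γ * σ ^ 2) := by positivity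
  rw [hties, measure_sdiff_null (condX1_setOf_c1Score_eq_zero hμ η (-1) hσ hγ),
    condX1_neg_one_eq_withDensity μ η hσ hγ]
  refine measure_add_withDensity_le_of_disjoint hU hA hAB (fun x hx => ?_) (fun x hx => ?_)
  · refine ENNReal.ofReal_le_one.2 (exp_le_one_iff.2 ?_)
    nlinarith [hx.out]
  · refine ENNReal.one_le_ofReal.2 (one_le_exp ?_)
    nlinarith [not_lt.1 (show ¬0 < c1Score μ γ x from hx)]

theorem bayes_optimal_linear_predictor_c1_general (d : ℕ) (μ : Vec d) (hμ : μ ≠ 0)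
    (σ γ η : ℝ) (hσ : 0 < σ) (hγ : 0 < γ)
    (w : Inp d) :
    AccP (Pc1 d μ σ γ η) w ≤
      AccP (Pc1 d μ σ γ η)
        ((1 / (vnorm μ * Real.sqrt (1 + γ ^ 2))) • ((γ • μ, μ, (0 : Vec d)) : Inp d)) := by
  set c := 1 / (vnorm μ * Real.sqrt (1 + γ ^ 2))
  have hc : 0 < c := by have := vnorm_pos hμ; positivity
  set wstar : Inp d := c • (γ • μ, μ, 0)
  have hpred (x : Inp d) : pred wstar x = c * c1Score μ γ x := by
    simp only [wstar, pred, c1Score, dot, Prod.smul_fst, Prod.smul_snd, Pi.smul_apply, smul_eq_mul,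
      Pi.zero_apply, mul_zero, zero_mul, Finset.sum_const_zero, add_zero, mul_add, Finset.mul_sum,
      mul_assoc]
  have hpos : {x | 0 < pred wstar x} = {x | 0 < c1Score μ γ x} := by
    simp only [hpred, mul_pos_iff_of_pos_left hc]
  have hneg : {x | pred wstar x < 0} = {x | c1Score μ γ x < 0} := by
    ext x
    simp only [Set.mem_ofPred_eq, hpred]
    exact ⟨fun h => neg_of_mul_neg_right h hc.le, mul_neg_of_pos_of_neg hc⟩
  rw [Pc1, AccP_jointOf, AccP_jointOf, hpos, hneg]
  refine ENNReal.toReal_mono (by simp [ENNReal.mul_eq_top]) ?_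
  rw [← mul_add, ← mul_add]
  exact mul_le_mul_right (condX1_bayes_optimal hμ η hσ.ne' hγ
    (measurableSet_lt measurable_const (measurable_pred w))
    (Set.disjoint_left.2 fun x (h₁ : 0 < pred w x) h₂ => lt_asymm h₁ h₂)) _

theorem bayes_optimal_linear_predictor_c1 (d : ℕ) (hd : 1 ≤ d) (μ : Vec d) (hμ : μ ≠ 0)
    (σ γ η : ℝ) (hσ : 0 < σ) (hγ : 0 < γ) (hη : 0 < η)
    (w : Inp d) (hw : w ∈ W1 d) :
    AccP (Pc1 d μ σ γ η) w ≤
      AccP (Pc1 d μ σ γ η)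
        ((1 / (vnorm μ * Real.sqrt (1 + γ ^ 2))) • ((γ • μ, μ, (0 : Vec d)) : Inp d)) :=
  bayes_optimal_linear_predictor_c1_general d μ hμ σ γ η hσ hγ w
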